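/- Let n ≥ 1, let λ ∈ ℝ, and let φ : ℝ → ℂ be a smooth even function with φ(0) = 1 that satisfies the radial eigenfunction equation of the hyperbolic Laplacian: φ″(r) + 2n·(cosh r/sinh r)·φ′(r) = −(λ² + n²)·φ(r) for all r ≠ 0. Then Dφ equals the Euclidean spherical function: (Dφ)(r) = cos(λr) for all r ∈ ℝ, where D = (1/(2n−1)!!)·∏_{k=1}^{n} (sinh r·(d/dr) + (2k−1)·cosh r), composed with smaller values of k to the left. -/

import Mathlib

/-- The factor `A_k` given by `(A_k g)(r) = sinh r · g'(r) + (2k-1) cosh r · g(r)`. -/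
noncomputable def Ahyp (k : ℕ) (g : ℝ → ℂ) : ℝ → ℂ :=
  fun r => (Real.sinh r : ℂ) * deriv g r + (2 * (k : ℂ) - 1) * (Real.cosh r : ℂ) * g r

/-- `AhypChain n f = A₁(A₂(⋯(Aₙ f)⋯))`, the composition with smaller indices to
the left. -/
noncomputable def AhypChain : ℕ → (ℝ → ℂ) → (ℝ → ℂ)
  | 0, f => f
  | n + 1, f => AhypChain n (Ahyp (n + 1) f)

/-- The shift operator `D = (1/(2n-1)!!) ∏_{k=1}^n (sinh r d/dr + (2k-1) cosh r)`. -/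
noncomputable def Dhyp (n : ℕ) (f : ℝ → ℂ) : ℝ → ℂ :=
  fun r => ((Nat.doubleFactorial (2 * n - 1) : ℂ))⁻¹ * AhypChain n f r

/-!
Call `ψ` a radial eigenfunction of level `k` if `ψ'' + 2k coth r · ψ' = -(λ² + k²) ψ` off the
origin (the equation of `H^{2k+1}`). If `ψ` has level `k + 1`, then `g = A_{k+1} ψ` satisfies
`g' = -(λ² + k²) sinh r · ψ`, and differentiating once more shows that `g` has level `k`. Hence
`f = A₁ ⋯ Aₙ φ` solves `f'' = -λ² f` off the origin, and by continuity everywhere. Each `A_k`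
preserves evenness, so `f'(0) = 0`, and `f(0) = (2n-1)‼ φ(0)`; uniqueness for this linear ODE
gives `f = (2n-1)‼ cos (λ r)`.
-/

theorem Function.Even.deriv {E : Type*} [NormedAddCommGroup E] [NormedSpace ℝ E] {f : ℝ → E}
    (hf : f.Even) : (deriv f).Odd := fun r => by
  simpa [funext hf] using deriv_comp_neg (f := f) (x := -r)

section Ahyp

variable {ψ : ℝ → ℂ}

theorem contDiff_Ahyp (k : ℕ) (hψ : ContDiff ℝ (⊤ : ℕ∞) ψ) : ContDiff ℝ (⊤ : ℕ∞) (Ahyp k ψ) := by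
  have hs : ContDiff ℝ (⊤ : ℕ∞) (fun r : ℝ => (Real.sinh r : ℂ)) :=
    Complex.ofRealCLM.contDiff.comp Real.contDiff_sinh
  have hc : ContDiff ℝ (⊤ : ℕ∞) (fun r : ℝ => (Real.cosh r : ℂ)) :=
    Complex.ofRealCLM.contDiff.comp Real.contDiff_cosh
  exact (hs.mul (contDiff_infty_iff_deriv.mp hψ).2).add ((contDiff_const.mul hc).mul hψ)

theorem hasDerivAt_Ahyp (k : ℕ) {r : ℝ} (hψ : DifferentiableAt ℝ ψ r)
    (hψ' : DifferentiableAt ℝ (deriv ψ) r) :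
    HasDerivAt (Ahyp k ψ)
      (Real.sinh r * deriv (deriv ψ) r + 2 * k * Real.cosh r * deriv ψ r
        + (2 * k - 1) * Real.sinh r * ψ r) r := by
  have := ((Real.hasDerivAt_sinh r).ofReal_comp.mul hψ'.hasDerivAt).add
    (((Real.hasDerivAt_cosh r).ofReal_comp.const_mul (2 * (k : ℂ) - 1)).mul hψ.hasDerivAt)
  exact this.congr_deriv (by ring)

theorem Function.Even.Ahyp (k : ℕ) (hψ : ψ.Even) : (Ahyp k ψ).Even := fun r => by
  simp only [_root_.Ahyp, Real.sinh_neg, Real.cosh_neg, hψ.deriv r, hψ r]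
  push_cast
  ring

theorem Ahyp_apply_zero (k : ℕ) (ψ : ℝ → ℂ) : Ahyp k ψ 0 = (2 * k - 1) * ψ 0 := by
  simp [Ahyp]

end Ahyp

def IsRadialEigenfunction (lam : ℝ) (k : ℕ) (ψ : ℝ → ℂ) : Prop :=
  ∀ r : ℝ, r ≠ 0 →
    deriv (deriv ψ) r + 2 * (k : ℂ) * ((Real.cosh r : ℂ) / (Real.sinh r : ℂ)) * deriv ψ r
      = -(((lam : ℂ)) ^ 2 + (k : ℂ) ^ 2) * ψ r

namespace IsRadialEigenfunction

variable {lam : ℝ} {k : ℕ} {ψ : ℝ → ℂ}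

theorem deriv_Ahyp_succ (h : IsRadialEigenfunction lam (k + 1) ψ) (hψ : ContDiff ℝ (⊤ : ℕ∞) ψ)
    {r : ℝ} (hr : r ≠ 0) :
    deriv (Ahyp (k + 1) ψ) r = -((lam : ℂ) ^ 2 + (k : ℂ) ^ 2) * (Real.sinh r * ψ r) := by
  have hsinh : (Real.sinh r : ℂ) ≠ 0 := by exact_mod_cast Real.sinh_ne_zero.mpr hr
  have hψ' := (contDiff_infty_iff_deriv.mp hψ).2
  rw [(hasDerivAt_Ahyp (k + 1) (hψ.differentiable (by simp) r)
    (hψ'.differentiable (by simp) r)).deriv]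
  have hode := h r hr
  field_simp at hode
  push_cast at hode ⊢
  linear_combination hode

theorem Ahyp_succ (h : IsRadialEigenfunction lam (k + 1) ψ) (hψ : ContDiff ℝ (⊤ : ℕ∞) ψ) :
    IsRadialEigenfunction lam k (Ahyp (k + 1) ψ) := by
  intro r hr
  have hsinh : (Real.sinh r : ℂ) ≠ 0 := by exact_mod_cast Real.sinh_ne_zero.mpr hr
  set C : ℂ := -((lam : ℂ) ^ 2 + (k : ℂ) ^ 2)
  have hderiv : deriv (Ahyp (k + 1) ψ) =ᶠ[nhds r] fun x => C * (Real.sinh x * ψ x) :=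
    (eventually_ne_nhds hr).mono fun x hx => h.deriv_Ahyp_succ hψ hx
  have hderiv2 : HasDerivAt (fun x : ℝ => C * (Real.sinh x * ψ x))
      (C * (Real.cosh r * ψ r + Real.sinh r * deriv ψ r)) r :=
    ((Real.hasDerivAt_sinh r).ofReal_comp.mul
      (hψ.differentiable (by simp) r).hasDerivAt).const_mul C
  rw [hderiv.deriv_eq, hderiv2.deriv, h.deriv_Ahyp_succ hψ hr, Ahyp]
  field_simp
  push_cast
  ring

end IsRadialEigenfunction

theorem contDiff_AhypChain : ∀ (m : ℕ) {ψ : ℝ → ℂ}, ContDiff ℝ (⊤ : ℕ∞) ψ →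
    ContDiff ℝ (⊤ : ℕ∞) (AhypChain m ψ)
  | 0, _, h => h
  | m + 1, _, h => contDiff_AhypChain m (contDiff_Ahyp (m + 1) h)

theorem IsRadialEigenfunction.AhypChain {lam : ℝ} :
    ∀ (m : ℕ) {ψ : ℝ → ℂ}, IsRadialEigenfunction lam m ψ → ContDiff ℝ (⊤ : ℕ∞) ψ →
      IsRadialEigenfunction lam 0 (AhypChain m ψ)
  | 0, _, h, _ => h
  | m + 1, _, h, hψ => (h.Ahyp_succ hψ).AhypChain m (contDiff_Ahyp (m + 1) hψ)

theorem Function.Even.AhypChain : ∀ (m : ℕ) {ψ : ℝ → ℂ}, ψ.Even → (AhypChain m ψ).Even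
  | 0, _, h => h
  | m + 1, _, h => (h.Ahyp (m + 1)).AhypChain m

open scoped Nat in
theorem AhypChain_apply_zero : ∀ (m : ℕ) (ψ : ℝ → ℂ),
    AhypChain m ψ 0 = (2 * m - 1)‼ * ψ 0
  | 0, _ => by simp [AhypChain]
  | m + 1, ψ => by
    rw [AhypChain, AhypChain_apply_zero m, Ahyp_apply_zero,
      show 2 * (m + 1) - 1 = 2 * m + 1 by omega, Nat.doubleFactorial_add_one]
    push_cast
    ring

theorem IsRadialEigenfunction.deriv_deriv_eq {lam : ℝ} {F : ℝ → ℂ}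
    (h : IsRadialEigenfunction lam 0 F) (hF : ContDiff ℝ 2 F) (r : ℝ) :
    deriv (deriv F) r = -(lam : ℂ) ^ 2 * F r := by
  have hF' : ContDiff ℝ 1 (deriv F) := (contDiff_succ_iff_deriv.mp hF).2.2
  refine congrFun (Continuous.ext_on (dense_compl_singleton 0) (hF'.continuous_deriv le_rfl)
    (continuous_const.mul hF.continuous) fun x hx => ?_) r
  simpa using h x hx

theorem eq_mul_cos_of_deriv_deriv_eq (lam : ℝ) {F : ℝ → ℂ} (hF : Differentiable ℝ F)
    (hF' : Differentiable ℝ (deriv F))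
    (hF'' : ∀ r, deriv (deriv F) r = -(lam : ℂ) ^ 2 * F r) (hF'0 : deriv F 0 = 0) (r : ℝ) :
    F r = F 0 * Real.cos (lam * r) := by
  let L : ℂ × ℂ →L[ℝ] ℂ × ℂ :=
    (ContinuousLinearMap.snd ℝ ℂ ℂ).prod (-((lam : ℂ) ^ 2) • ContinuousLinearMap.fst ℝ ℂ ℂ)
  have hcos : ∀ t : ℝ, HasDerivAt (fun t : ℝ => (Real.cos (lam * t) : ℂ))
      (-(Real.sin (lam * t) * lam)) t := fun t => by
    simpa using (((hasDerivAt_id t).const_mul lam).cos).ofReal_comp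
  have hsin : ∀ t : ℝ, HasDerivAt (fun t : ℝ => (Real.sin (lam * t) : ℂ))
      (Real.cos (lam * t) * lam) t := fun t => by
    simpa using (((hasDerivAt_id t).const_mul lam).sin).ofReal_comp
  have key := ODE_solution_unique_univ (v := fun _ => L) (s := fun _ => Set.univ) (t₀ := 0)
    (f := fun t => (F t, deriv F t))
    (g := fun t => (F 0 * Real.cos (lam * t), -(F 0 * lam) * Real.sin (lam * t)))
    (fun _ => L.lipschitz.lipschitzOnWith)
    (fun t => ⟨((hF t).hasDerivAt.prodMk (hF' t).hasDerivAt).congr_deriv (by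
      simp [L, hF'' t]), trivial⟩)
    (fun t => ⟨(((hcos t).const_mul (F 0)).prodMk ((hsin t).const_mul _)).congr_deriv (by
      simp only [L, ContinuousLinearMap.prod_apply, ContinuousLinearMap.coe_fst',
        ContinuousLinearMap.coe_snd', smul_apply, smul_eq_mul, Prod.mk.injEq]
      constructor <;> ring), trivial⟩)
    (by simp [hF'0])
  exact congrArg Prod.fst (congrFun key r)

theorem stmt_10_general (n : ℕ) (lam : ℝ) (φ : ℝ → ℂ)
    (hφ : ContDiff ℝ (⊤ : ℕ∞) φ) (heven : ∀ r : ℝ, φ (-r) = φ r) (h0 : φ 0 = 1)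
    (hode : ∀ r : ℝ, r ≠ 0 →
      deriv (deriv φ) r + 2 * (n : ℂ) * ((Real.cosh r : ℂ) / (Real.sinh r : ℂ)) * deriv φ r
        = -(((lam : ℂ)) ^ 2 + (n : ℂ) ^ 2) * φ r) :
    ∀ r : ℝ, Dhyp n φ r = (Real.cos (lam * r) : ℂ) := by
  intro r
  have hF : ContDiff ℝ (⊤ : ℕ∞) (AhypChain n φ) := contDiff_AhypChain n hφ
  have hF'' := (IsRadialEigenfunction.AhypChain n hode hφ).deriv_deriv_eq
    (hF.of_le (WithTop.coe_le_coe.mpr le_top))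
  have hF'0 : deriv (AhypChain n φ) 0 = 0 := (Function.Even.AhypChain n heven).deriv.map_zero
  have hdf : ((2 * n - 1).doubleFactorial : ℂ) ≠ 0 := mod_cast (Nat.doubleFactorial_pos _).ne'
  rw [Dhyp, eq_mul_cos_of_deriv_deriv_eq lam (hF.differentiable (by simp))
    ((contDiff_infty_iff_deriv.mp hF).2.differentiable (by simp)) hF'' hF'0 r,
    AhypChain_apply_zero, h0, mul_one, inv_mul_cancel_left₀ hdf]

/-- `D` maps the spherical function `φ_λ` of `H^{2n+1}` to `cos (λ r)`. -/
theorem stmt_10 (n : ℕ) (hn : 1 ≤ n) (lam : ℝ) (φ : ℝ → ℂ)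
    (hφ : ContDiff ℝ (⊤ : ℕ∞) φ) (heven : ∀ r : ℝ, φ (-r) = φ r) (h0 : φ 0 = 1)
    (hode : ∀ r : ℝ, r ≠ 0 →
      deriv (deriv φ) r + 2 * (n : ℂ) * ((Real.cosh r : ℂ) / (Real.sinh r : ℂ)) * deriv φ r
        = -(((lam : ℂ)) ^ 2 + (n : ℂ) ^ 2) * φ r) :
    ∀ r : ℝ, Dhyp n φ r = (Real.cos (lam * r) : ℂ) :=
  stmt_10_general n lam φ hφ heven h0 hode
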